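/- Lommel's integral: for any ν ≥ 0 and any t > 0, ∫₀^t r·J_ν(r)² dr = (t² − ν²)/2 · J_ν(t)² + t²/2 · (J_ν'(t))², where J_ν is the Bessel function of the first kind. -/

import Mathlib

/-!
Write `J_ν(x) = (x/2)^ν P((x/2)²)` with `P(y) = Σ (-1)^m y^m / (m! Γ(m+ν+1))` an entire power
series; Bessel's equation for `J_ν` becomes `y P'' + (ν+1) P' + P = 0`, which is the recursion of
the coefficients of `P`. Expressed through `P`, the right-hand side
`(r² − ν²)/2 · J_ν(r)² + r²/2 · J_ν'(r)²` extends continuously to `r = 0`, where it vanishes, and by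
Bessel's equation its derivative is `r J_ν(r)²`; the fundamental theorem of calculus concludes.
-/

/-- The Bessel function of the first kind of order `ν`, defined by its power series
`J_ν(x) = Σ_{m=0}^∞ (−1)^m / (m! Γ(m+ν+1)) (x/2)^{2m+ν}` (for `x ≥ 0`). -/
noncomputable def besselJ (ν x : ℝ) : ℝ :=
  ∑' m : ℕ, ((-1 : ℝ) ^ m / (m.factorial * Real.Gamma ((m : ℝ) + ν + 1)))
    * (x / 2) ^ (2 * m) * (x / 2) ^ ν

open scoped Nat

section PowerSeries

noncomputable def powerSeriesSum (c : ℕ → ℝ) (y : ℝ) : ℝ := ∑' n, c n * y ^ n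

def derivCoeff (c : ℕ → ℝ) (n : ℕ) : ℝ := (n + 1) * c (n + 1)

variable {c : ℕ → ℝ}

theorem summable_mul_pow (hc : ∀ R, Summable fun n => |c n| * R ^ n) (y : ℝ) :
    Summable fun n => c n * y ^ n :=
  (hc |y|).of_norm_bounded fun n => by simp

theorem summable_abs_derivCoeff_mul_pow (hc : ∀ R, Summable fun n => |c n| * R ^ n) (R : ℝ) :
    Summable fun n => |derivCoeff c n| * R ^ n := by
  refine ((summable_nat_add_iff 1).mpr (hc (2 * (|R| + 1)))).of_norm_bounded fun n => ?_
  have h2 : (n + 1 : ℝ) ≤ 2 ^ (n + 1) := by exact_mod_cast Nat.lt_two_pow_self.le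
  have hR : |R| ^ n ≤ (|R| + 1) ^ (n + 1) :=
    (pow_le_pow_left₀ (abs_nonneg R) (by linarith) n).trans
      (pow_le_pow_right₀ (by linarith [abs_nonneg R]) n.le_succ)
  calc ‖|derivCoeff c n| * R ^ n‖ = |c (n + 1)| * ((n + 1) * |R| ^ n) := by
        rw [derivCoeff, Real.norm_eq_abs, abs_mul, abs_abs, abs_mul, abs_pow,
          abs_of_pos (by positivity : (0 : ℝ) < n + 1)]
        ring
    _ ≤ |c (n + 1)| * (2 ^ (n + 1) * (|R| + 1) ^ (n + 1)) := by gcongr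
    _ = |c (n + 1)| * (2 * (|R| + 1)) ^ (n + 1) := by rw [mul_pow]

theorem hasDerivAt_powerSeriesSum (hc : ∀ R, Summable fun n => |c n| * R ^ n) (y : ℝ) :
    HasDerivAt (powerSeriesSum c) (powerSeriesSum (derivCoeff c) y) y := by
  have hshift : powerSeriesSum c = fun y => c 0 + ∑' n, c (n + 1) * y ^ (n + 1) :=
    funext fun y => by rw [powerSeriesSum, (summable_mul_pow hc y).tsum_eq_zero_add]; simp
  have hterm : ∀ (n : ℕ) (z : ℝ),
      HasDerivAt (fun z => c (n + 1) * z ^ (n + 1)) (derivCoeff c n * z ^ n) z := fun n z =>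
    ((hasDerivAt_pow (n + 1) z).const_mul (c (n + 1))).congr_deriv
      (by rw [derivCoeff]; push_cast; ring)
  have hbound : ∀ (n : ℕ), ∀ z ∈ Metric.ball (0 : ℝ) (|y| + 1),
      ‖derivCoeff c n * z ^ n‖ ≤ |derivCoeff c n| * (|y| + 1) ^ n := by
    intro n z hz
    rw [mem_ball_zero_iff, Real.norm_eq_abs] at hz
    rw [Real.norm_eq_abs, abs_mul, abs_pow]
    gcongr
  have hy : y ∈ Metric.ball (0 : ℝ) (|y| + 1) := by simp
  rw [hshift]
  exact (hasDerivAt_tsum_of_isPreconnected (summable_abs_derivCoeff_mul_pow hc (|y| + 1))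
    Metric.isOpen_ball (convex_ball 0 _).isPreconnected (fun n z _ => hterm n z) hbound hy
    ((summable_nat_add_iff 1).mpr (summable_mul_pow hc y)) hy).const_add _

theorem continuous_powerSeriesSum (hc : ∀ R, Summable fun n => |c n| * R ^ n) :
    Continuous (powerSeriesSum c) :=
  continuous_iff_continuousAt.mpr fun y => (hasDerivAt_powerSeriesSum hc y).continuousAt

theorem hasDerivAt_powerSeriesSum_div_two_sq (hc : ∀ R, Summable fun n => |c n| * R ^ n)
    (x : ℝ) : HasDerivAt (fun x => powerSeriesSum c ((x / 2) ^ 2))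
      (powerSeriesSum (derivCoeff c) ((x / 2) ^ 2) * (x / 2)) x :=
  (hasDerivAt_powerSeriesSum hc _).comp x
    ((((hasDerivAt_id x).div_const 2).fun_pow 2).congr_deriv (by simp; ring))

theorem hasSum_natCast_mul_mul_pow (hc : ∀ R, Summable fun n => |c n| * R ^ n) (y : ℝ) :
    HasSum (fun n => n * c n * y ^ n) (y * powerSeriesSum (derivCoeff c) y) := by
  rw [← hasSum_nat_add_iff' 1]
  simpa [powerSeriesSum, derivCoeff, pow_succ, mul_comm, mul_left_comm, mul_assoc] using
    (summable_mul_pow (summable_abs_derivCoeff_mul_pow hc) y).hasSum.mul_left y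

end PowerSeries

noncomputable def besselCoeff (ν : ℝ) (m : ℕ) : ℝ :=
  (-1) ^ m / (m.factorial * Real.Gamma ((m : ℝ) + ν + 1))

/-- This holds for every `ν`: at the poles of `Γ`, where `Real.Gamma` is `0`, both sides vanish. -/
theorem besselCoeff_succ (ν : ℝ) (m : ℕ) :
    (m + 1) * (m + ν + 1) * besselCoeff ν (m + 1) = -besselCoeff ν m := by
  have hcast : ((m + 1 : ℕ) : ℝ) + ν + 1 = (m + ν + 1) + 1 := by push_cast; ring
  by_cases hs : (m : ℝ) + ν + 1 = 0
  · simp [besselCoeff, hs, Real.Gamma_zero]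
  rw [besselCoeff, besselCoeff, hcast, Real.Gamma_add_one hs]
  rcases eq_or_ne (Real.Gamma (m + ν + 1)) 0 with hΓ | hΓ
  · simp [hΓ]
  rw [Nat.factorial_succ, Nat.cast_mul, pow_succ]
  field_simp
  push_cast
  ring

theorem abs_besselCoeff_le {ν : ℝ} (hν : 0 ≤ ν) (m : ℕ) :
    |besselCoeff ν m| ≤ |besselCoeff ν 0| / m ! := by
  induction m with
  | zero => simp
  | succ m ih =>
    have hrec : (m + 1) * (m + ν + 1) * |besselCoeff ν (m + 1)| = |besselCoeff ν m| := by
      rw [← abs_of_pos (by positivity : (0 : ℝ) < (m + 1) * (m + ν + 1)), ← abs_mul,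
        besselCoeff_succ, abs_neg]
    calc |besselCoeff ν (m + 1)| ≤ |besselCoeff ν m| / (m + 1) := by
          rw [le_div_iff₀ (by positivity), ← hrec]
          nlinarith [mul_nonneg (abs_nonneg (besselCoeff ν (m + 1)))
            (by positivity : (0 : ℝ) ≤ (m + 1) * (m + ν))]
      _ ≤ |besselCoeff ν 0| / m ! / (m + 1) := by gcongr
      _ = |besselCoeff ν 0| / (m + 1)! := by
          rw [Nat.factorial_succ, Nat.cast_mul, div_div, mul_comm]
          push_cast
          ring

theorem summable_abs_besselCoeff_mul_pow {ν : ℝ} (hν : 0 ≤ ν) (R : ℝ) :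
    Summable fun m => |besselCoeff ν m| * R ^ m := by
  refine ((Real.summable_pow_div_factorial |R|).mul_left |besselCoeff ν 0|).of_norm_bounded
    fun m => ?_
  calc ‖|besselCoeff ν m| * R ^ m‖ = |besselCoeff ν m| * |R| ^ m := by simp
    _ ≤ |besselCoeff ν 0| / m ! * |R| ^ m := by gcongr; exact abs_besselCoeff_le hν m
    _ = |besselCoeff ν 0| * (|R| ^ m / m !) := by ring

theorem besselSeries_ode {ν : ℝ} (hν : 0 ≤ ν) (y : ℝ) :
    y * powerSeriesSum (derivCoeff (derivCoeff (besselCoeff ν))) y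
      + (ν + 1) * powerSeriesSum (derivCoeff (besselCoeff ν)) y
      + powerSeriesSum (besselCoeff ν) y = 0 := by
  have ha := summable_abs_besselCoeff_mul_pow hν
  have hda := summable_abs_derivCoeff_mul_pow ha
  have hsum := ((hasSum_natCast_mul_mul_pow hda y).add
    ((summable_mul_pow hda y).hasSum.mul_left (ν + 1))).add (summable_mul_pow ha y).hasSum
  refine hsum.unique ?_
  convert hasSum_zero with n
  rw [derivCoeff]
  linear_combination y ^ n * besselCoeff_succ ν n

theorem besselJ_eq (ν x : ℝ) :
    besselJ ν x = powerSeriesSum (besselCoeff ν) ((x / 2) ^ 2) * (x / 2) ^ ν := by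
  rw [besselJ, powerSeriesSum, ← tsum_mul_right]
  congr! 2 with m
  rw [besselCoeff, ← pow_mul]

theorem hasDerivAt_div_two_rpow (ν : ℝ) {x : ℝ} (hx : x ≠ 0) :
    HasDerivAt (fun x => (x / 2) ^ ν) (ν * (x / 2) ^ ν / x) x := by
  have hx2 : x / 2 ≠ 0 := div_ne_zero hx two_ne_zero
  refine ((Real.hasDerivAt_rpow_const (Or.inl hx2)).comp x
    ((hasDerivAt_id x).div_const 2)).congr_deriv ?_
  rw [Real.rpow_sub_one hx2]
  field_simp

theorem continuous_div_two_rpow {ν : ℝ} (hν : 0 ≤ ν) : Continuous fun x : ℝ => (x / 2) ^ ν :=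
  (Real.continuous_rpow_const hν).comp (continuous_id.div_const 2)

theorem continuous_besselJ {ν : ℝ} (hν : 0 ≤ ν) : Continuous (besselJ ν) := by
  have hP := continuous_powerSeriesSum (summable_abs_besselCoeff_mul_pow hν)
  have hq := continuous_div_two_rpow hν
  rw [funext (besselJ_eq ν)]
  fun_prop

theorem hasDerivAt_besselJ {ν x : ℝ} (hν : 0 ≤ ν) (hx : x ≠ 0) :
    HasDerivAt (besselJ ν)
      (powerSeriesSum (derivCoeff (besselCoeff ν)) ((x / 2) ^ 2) * (x / 2) * (x / 2) ^ ν
        + powerSeriesSum (besselCoeff ν) ((x / 2) ^ 2) * (ν * (x / 2) ^ ν / x)) x := by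
  rw [funext (besselJ_eq ν)]
  exact (hasDerivAt_powerSeriesSum_div_two_sq (summable_abs_besselCoeff_mul_pow hν) x).fun_mul
    (hasDerivAt_div_two_rpow ν hx)

/-- `(r² − ν²)/2 · J_ν(r)² + r²/2 · J_ν'(r)²` for `r ≠ 0`, written through the power series so that
it is continuous at `0` (using `r J_ν'(r) = (r/2)^ν (r²/2 · P'((r/2)²) + ν P((r/2)²))`). -/
noncomputable def lommelPrimitive (ν r : ℝ) : ℝ :=
  ((r ^ 2 - ν ^ 2) / 2 * powerSeriesSum (besselCoeff ν) ((r / 2) ^ 2) ^ 2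
    + (r ^ 2 / 2 * powerSeriesSum (derivCoeff (besselCoeff ν)) ((r / 2) ^ 2)
      + ν * powerSeriesSum (besselCoeff ν) ((r / 2) ^ 2)) ^ 2 / 2) * ((r / 2) ^ ν) ^ 2

theorem hasDerivAt_lommelPrimitive {ν r : ℝ} (hν : 0 ≤ ν) (hr : r ≠ 0) :
    HasDerivAt (lommelPrimitive ν) (r * besselJ ν r ^ 2) r := by
  rw [besselJ_eq]
  set P := powerSeriesSum (besselCoeff ν)
  set P' := powerSeriesSum (derivCoeff (besselCoeff ν))
  set P'' := powerSeriesSum (derivCoeff (derivCoeff (besselCoeff ν)))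
  have ha := summable_abs_besselCoeff_mul_pow hν
  have hP : HasDerivAt (fun r => P ((r / 2) ^ 2)) (P' ((r / 2) ^ 2) * (r / 2)) r :=
    hasDerivAt_powerSeriesSum_div_two_sq ha r
  have hP' : HasDerivAt (fun r => P' ((r / 2) ^ 2)) (P'' ((r / 2) ^ 2) * (r / 2)) r :=
    hasDerivAt_powerSeriesSum_div_two_sq (summable_abs_derivCoeff_mul_pow ha) r
  have hF :=
    (((((hasDerivAt_pow 2 r).sub_const (ν ^ 2)).div_const 2).fun_mul (hP.fun_pow 2)).fun_add
      (((((hasDerivAt_pow 2 r).div_const 2).fun_mul hP').fun_add (hP.const_mul ν)).fun_pow 2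
        |>.div_const 2)).fun_mul ((hasDerivAt_div_two_rpow ν hr).fun_pow 2)
  refine hF.congr_deriv ?_
  have hode : (r / 2) ^ 2 * P'' ((r / 2) ^ 2) + (ν + 1) * P' ((r / 2) ^ 2) + P ((r / 2) ^ 2) = 0 :=
    besselSeries_ode hν _
  set q := (r / 2) ^ ν
  set p := P ((r / 2) ^ 2)
  set p' := P' ((r / 2) ^ 2)
  set p'' := P'' ((r / 2) ^ 2)
  field_simp
  -- the defect is `r q² (r²/2 · p' + ν p)` times Bessel's equation, up to cleared denominators
  linear_combination (4 * q ^ 2 * r ^ 2 * (2 * ν * p + r ^ 2 * p')) * hode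

theorem lommelPrimitive_zero (ν : ℝ) : lommelPrimitive ν 0 = 0 := by
  rw [lommelPrimitive]
  ring

theorem lommelPrimitive_eq {ν t : ℝ} (hν : 0 ≤ ν) (ht : t ≠ 0) :
    lommelPrimitive ν t =
      (t ^ 2 - ν ^ 2) / 2 * besselJ ν t ^ 2 + t ^ 2 / 2 * deriv (besselJ ν) t ^ 2 := by
  rw [(hasDerivAt_besselJ hν ht).deriv, besselJ_eq, lommelPrimitive]
  field_simp

theorem continuous_lommelPrimitive {ν : ℝ} (hν : 0 ≤ ν) : Continuous (lommelPrimitive ν) := by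
  have ha := summable_abs_besselCoeff_mul_pow hν
  have hP := continuous_powerSeriesSum ha
  have hP' := continuous_powerSeriesSum (summable_abs_derivCoeff_mul_pow ha)
  have hq := continuous_div_two_rpow hν
  unfold lommelPrimitive
  fun_prop

theorem stmt_10 (ν t : ℝ) (hν : 0 ≤ ν) (ht : 0 < t) :
    ∫ r in (0:ℝ)..t, r * (besselJ ν r) ^ 2 =
      (t ^ 2 - ν ^ 2) / 2 * (besselJ ν t) ^ 2
        + t ^ 2 / 2 * (deriv (besselJ ν) t) ^ 2 := by
  have hint : IntervalIntegrable (fun r => r * besselJ ν r ^ 2) MeasureTheory.volume 0 t :=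
    (continuous_id.mul ((continuous_besselJ hν).pow 2)).intervalIntegrable 0 t
  rw [intervalIntegral.integral_eq_sub_of_hasDerivAt_of_le ht.le
    (continuous_lommelPrimitive hν).continuousOn
    (fun r hr => hasDerivAt_lommelPrimitive hν hr.1.ne') hint,
    lommelPrimitive_zero, sub_zero, lommelPrimitive_eq hν ht.ne']
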